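/- arXiv:math/0506211 — 4 statements merged into one kernel-verified Lean document; each statement's English description precedes it below -/
import Mathlib

section
/- Let n ≥ 1, let f : ℝⁿ \ {0} → ℂ be continuous and positively homogeneous of degree −n, and let T be an invertible linear map on ℝⁿ. Then for every s ∈ ℂ, ∫_{S^{n−1}} f(Tη) |Tη|^s dS(η) = (1/|det T|) · ∫_{S^{n−1}} f(ξ) |T^{−1}ξ|^{−s} dS(ξ). -/
open MeasureTheory Metric Set

/-!
In polar coordinates `x = r • η`, a function `H` homogeneous of degree `-d` (`d = dim E`) has
radial integrand `r ^ (d - 1) * r ^ (-d) = r⁻¹`, so its integral over a shell `{a < N x < b}` of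
any gauge `N` equals `log (b / a)` times its integral over the unit sphere. The shells
`{1 < ‖x‖ < e}` and `{1 < ‖T⁻¹ y‖ < e}` correspond under `T`, so the linear change of variables
gives `∫_S H ∘ T = |det T|⁻¹ ∫_S H`. The theorem is the case `H y = f y * (‖y‖ / ‖T⁻¹ y‖) ^ s`.
-/

namespace MeasureTheory

variable {E F : Type*} [NormedAddCommGroup E] [NormedSpace ℝ E] [NormedAddCommGroup F]

theorem setIntegral_Ioo_inv {a b : ℝ} (ha : 0 < a) (hab : a ≤ b) :
    ∫ r in Ioo a b, r⁻¹ = Real.log (b / a) := by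
  rw [setIntegral_congr_set Ioo_ae_eq_Ioc, ← intervalIntegral.integral_of_le hab,
    integral_inv_of_pos ha (ha.trans_le hab)]

theorem integral_volumeIoiPow [NormedSpace ℝ F] (m : ℕ) (φ : ℝ → F) :
    ∫ r, φ r ∂Measure.volumeIoiPow m = ∫ r in Ioi (0 : ℝ), r ^ m • φ r := by
  simp only [Measure.volumeIoiPow, ENNReal.ofReal]
  rw [integral_withDensity_eq_integral_smul (measurable_subtype_coe.pow_const _).real_toNNReal,
    integral_subtype_comap measurableSet_Ioi fun r => Real.toNNReal (r ^ m) • φ r]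
  refine setIntegral_congr_fun measurableSet_Ioi fun r (hr : 0 < r) => ?_
  rw [NNReal.smul_def, Real.coe_toNNReal _ (pow_nonneg hr.le _)]

theorem setIntegral_Ioi_pow_smul_indicator_preimage_Ioo [NormedSpace ℝ F] [CompleteSpace F]
    {d : ℕ} (hd : d ≠ 0) {H : E → F} {N : E → ℝ} {x : E}
    (hH : ∀ t : ℝ, 0 < t → H (t • x) = t ^ (-(d : ℤ)) • H x)
    (hN : ∀ t : ℝ, 0 < t → N (t • x) = t * N x) (hx : 0 < N x) {a b : ℝ} (ha : 0 < a)
    (hab : a ≤ b) :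
    ∫ r in Ioi (0 : ℝ), r ^ (d - 1) • (N ⁻¹' Ioo a b).indicator H (r • x)
      = Real.log (b / a) • H x := by
  have hslice : ∀ r ∈ Ioi (0 : ℝ), r ^ (d - 1) • (N ⁻¹' Ioo a b).indicator H (r • x)
      = (Ioo (a / N x) (b / N x)).indicator (fun r => r⁻¹ • H x) r := by
    intro r (hr : 0 < r)
    have hmem : r • x ∈ N ⁻¹' Ioo a b ↔ r ∈ Ioo (a / N x) (b / N x) := by
      simp only [mem_preimage, mem_Ioo, hN r hr, div_lt_iff₀ hx, lt_div_iff₀ hx]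
    by_cases h : r ∈ Ioo (a / N x) (b / N x)
    · have hexp : ((d - 1 : ℕ) : ℤ) + -(d : ℤ) = -1 := by omega
      rw [indicator_of_mem (hmem.2 h), indicator_of_mem h, hH r hr, smul_smul, ← zpow_natCast,
        ← zpow_add₀ hr.ne', hexp, zpow_neg_one]
    · rw [indicator_of_notMem (mt hmem.1 h), indicator_of_notMem h, smul_zero]
  have hIoo : Ioo (a / N x) (b / N x) ⊆ Ioi 0 := fun r hr => (div_pos ha hx).trans hr.1
  rw [setIntegral_congr_fun measurableSet_Ioi hslice, setIntegral_indicator measurableSet_Ioo,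
    inter_eq_right.2 hIoo, integral_smul_const,
    setIntegral_Ioo_inv (div_pos ha hx) (div_le_div_of_nonneg_right hab hx.le),
    div_div_div_cancel_right₀ hx.ne']

theorem exists_pos_mul_norm_le_of_homogeneous [FiniteDimensional ℝ E] [Nontrivial E]
    {N : E → ℝ} (hN : Continuous N)
    (hN_pos : ∀ x, x ≠ 0 → 0 < N x) (hN_smul : ∀ t : ℝ, 0 ≤ t → ∀ x, N (t • x) = t * N x) :
    ∃ c > 0, ∀ x, c * ‖x‖ ≤ N x := by
  obtain ⟨η, hη, hmin⟩ := (isCompact_sphere (0 : E) 1).exists_isMinOn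
    (NormedSpace.sphere_nonempty.2 zero_le_one) hN.continuousOn
  refine ⟨N η, hN_pos η (ne_of_mem_sphere hη one_ne_zero), fun x => ?_⟩
  rcases eq_or_ne x 0 with rfl | hx
  · have hN0 : N 0 = 0 := by simpa using hN_smul 0 le_rfl 0
    simp [hN0]
  have hx' : 0 < ‖x‖ := norm_pos_iff.2 hx
  calc N η * ‖x‖ ≤ N (‖x‖⁻¹ • x) * ‖x‖ :=
        mul_le_mul_of_nonneg_right (hmin (by simp [norm_smul, hx'.ne'])) hx'.le
    _ = N x := by
        rw [hN_smul _ (inv_nonneg.2 hx'.le), mul_comm, ← mul_assoc, mul_inv_cancel₀ hx'.ne',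
          one_mul]

theorem ContinuousOn.mul_cpow_norm_div_norm [FiniteDimensional ℝ E] {f : E → ℂ}
    (hf : ContinuousOn f {x | x ≠ 0}) (L : E ≃ₗ[ℝ] E) (s : ℂ) :
    ContinuousOn (fun y => f y * ((‖y‖ / ‖L y‖ : ℝ) : ℂ) ^ s) {y | y ≠ 0} := by
  have hL : ∀ y : E, y ≠ 0 → 0 < ‖L y‖ := fun y hy =>
    norm_pos_iff.2 ((map_ne_zero_iff L L.injective).2 hy)
  refine hf.mul (ContinuousOn.cpow_const ?_ fun y hy => ?_)
  · exact Complex.continuous_ofReal.comp_continuousOn (continuous_norm.continuousOn.div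
      L.toContinuousLinearEquiv.continuous.norm.continuousOn fun y hy => (hL y hy).ne')
  · exact Complex.ofReal_mem_slitPlane.2 (div_pos (norm_pos_iff.2 hy) (hL y hy))

variable [FiniteDimensional ℝ E] [MeasurableSpace E] [BorelSpace E] (μ : Measure E)
  [μ.IsAddHaarMeasure]

theorem integral_eq_integral_toSphere_setIntegral_Ioi [Nontrivial E] [NormedSpace ℝ F] {g : E → F}
    (hg : Integrable g μ) :
    ∫ x, g x ∂μ = ∫ η, (∫ r in Ioi (0 : ℝ),
      r ^ (Module.finrank ℝ E - 1) • g (r • (η : E))) ∂μ.toSphere := by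
  set e := (homeomorphUnitSphereProd E).toMeasurableEquiv
  have he : MeasurePreserving e.symm
      (μ.toSphere.prod (.volumeIoiPow (Module.finrank ℝ E - 1))) (μ.comap (↑)) :=
    μ.measurePreserving_homeomorphUnitSphereProd.symm e
  have hg' : Integrable (fun p : sphere (0 : E) 1 × Ioi (0 : ℝ) => g ((p.2 : ℝ) • (p.1 : E)))
      (μ.toSphere.prod (.volumeIoiPow (Module.finrank ℝ E - 1))) :=
    (he.integrable_comp_emb e.symm.measurableEmbedding).2
      ((integrableOn_iff_comap_subtypeVal (measurableSet_singleton 0).compl).1 hg.integrableOn)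
  calc ∫ x, g x ∂μ = ∫ x : ({0}ᶜ : Set E), g x ∂(μ.comap (↑)) := by
        rw [integral_subtype_comap (measurableSet_singleton _).compl, restrict_compl_singleton]
    _ = ∫ p, g ((p.2 : ℝ) • (p.1 : E))
          ∂(μ.toSphere.prod (.volumeIoiPow (Module.finrank ℝ E - 1))) :=
        (he.integral_comp' (fun x : ({0}ᶜ : Set E) => g x)).symm
    _ = _ := by
        rw [integral_prod _ hg']
        exact integral_congr_ae (.of_forall fun η => integral_volumeIoiPow _ fun r => g (r • η))

theorem integrableOn_preimage_Icc_of_continuousOn [Nontrivial E] {H : E → F}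
    (hH : ContinuousOn H {x | x ≠ 0}) {N : E → ℝ} (hN : Continuous N)
    (hN_pos : ∀ x, x ≠ 0 → 0 < N x) (hN_smul : ∀ t : ℝ, 0 ≤ t → ∀ x, N (t • x) = t * N x)
    {a b : ℝ} (ha : 0 < a) : IntegrableOn H (N ⁻¹' Icc a b) μ := by
  obtain ⟨c, hc, hcN⟩ := exists_pos_mul_norm_le_of_homogeneous hN hN_pos hN_smul
  have hbdd : N ⁻¹' Icc a b ⊆ closedBall 0 (b / c) := fun x hx => by
    rw [mem_closedBall_zero_iff, le_div_iff₀ hc, mul_comm]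
    exact (hcN x).trans hx.2
  have hK : IsCompact (N ⁻¹' Icc a b) :=
    isCompact_of_isClosed_isBounded (isClosed_Icc.preimage hN) (isBounded_closedBall.subset hbdd)
  refine (hH.mono fun x hx (h0 : x = 0) => ?_).integrableOn_compact hK
  have hN0 : N 0 = 0 := by simpa using hN_smul 0 le_rfl 0
  rw [h0, mem_preimage, hN0] at hx
  exact ha.not_ge hx.1

theorem setIntegral_preimage_Ioo_eq_log_smul_integral_toSphere [Nontrivial E] [NormedSpace ℝ F]
    [CompleteSpace F] {H : E → F} (hH : ContinuousOn H {x | x ≠ 0})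
    (hH_hom : ∀ t : ℝ, 0 < t → ∀ x, x ≠ 0 → H (t • x) = t ^ (-(Module.finrank ℝ E : ℤ)) • H x)
    {N : E → ℝ} (hN : Continuous N) (hN_pos : ∀ x, x ≠ 0 → 0 < N x)
    (hN_smul : ∀ t : ℝ, 0 ≤ t → ∀ x, N (t • x) = t * N x) {a b : ℝ} (ha : 0 < a) (hab : a ≤ b) :
    ∫ x in N ⁻¹' Ioo a b, H x ∂μ = Real.log (b / a) • ∫ η, H η ∂μ.toSphere := by
  have hmeas : MeasurableSet (N ⁻¹' Ioo a b) := hN.measurable measurableSet_Ioo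
  have hint : Integrable ((N ⁻¹' Ioo a b).indicator H) μ :=
    (integrable_indicator_iff hmeas).2 ((integrableOn_preimage_Icc_of_continuousOn μ hH hN
      hN_pos hN_smul ha).mono_set (preimage_mono Ioo_subset_Icc_self))
  rw [← integral_indicator hmeas, integral_eq_integral_toSphere_setIntegral_Ioi μ hint,
    ← integral_smul]
  refine integral_congr_ae (.of_forall fun η => ?_)
  have hη : (η : E) ≠ 0 := ne_of_mem_sphere η.2 one_ne_zero
  exact setIntegral_Ioi_pow_smul_indicator_preimage_Ioo Module.finrank_pos.ne'
    (fun t ht => hH_hom t ht _ hη) (fun t ht => hN_smul t ht.le _) (hN_pos _ hη) ha hab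

theorem integral_comp_linearEquiv [NormedSpace ℝ F] (T : E ≃ₗ[ℝ] E) (g : E → F) :
    ∫ x, g (T x) ∂μ = |LinearMap.det (T : E →ₗ[ℝ] E)|⁻¹ • ∫ y, g y ∂μ := by
  have hmap := μ.map_linearMap_addHaar_eq_smul_addHaar (LinearEquiv.isUnit_det' T).ne_zero
  calc ∫ x, g (T x) ∂μ = ∫ y, g y ∂(μ.map (T : E →ₗ[ℝ] E)) :=
        (integral_map_equiv T.toContinuousLinearEquiv.toHomeomorph.toMeasurableEquiv g).symm
    _ = _ := by rw [hmap, integral_smul_measure, ENNReal.toReal_ofReal (abs_nonneg _), abs_inv]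

theorem setIntegral_preimage_comp_linearEquiv [NormedSpace ℝ F] (T : E ≃ₗ[ℝ] E) (g : E → F)
    {s : Set E} (hs : MeasurableSet s) :
    ∫ x in T ⁻¹' s, g (T x) ∂μ = |LinearMap.det (T : E →ₗ[ℝ] E)|⁻¹ • ∫ y in s, g y ∂μ := by
  have hT : Measurable T := T.toContinuousLinearEquiv.continuous.measurable
  rw [← integral_indicator hs, ← integral_comp_linearEquiv, ← integral_indicator (hT hs)]
  rfl

theorem integral_toSphere_comp_linearEquiv [Nontrivial E] [NormedSpace ℝ F] [CompleteSpace F]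
    {H : E → F} (hH : ContinuousOn H {x | x ≠ 0})
    (hH_hom : ∀ t : ℝ, 0 < t → ∀ x, x ≠ 0 → H (t • x) = t ^ (-(Module.finrank ℝ E : ℤ)) • H x)
    (T : E ≃ₗ[ℝ] E) :
    ∫ η, H (T η) ∂μ.toSphere = |LinearMap.det (T : E →ₗ[ℝ] E)|⁻¹ • ∫ ξ, H ξ ∂μ.toSphere := by
  have hT := T.toContinuousLinearEquiv.continuous
  have hHT : ContinuousOn (fun x => H (T x)) {x | x ≠ 0} :=
    hH.comp hT.continuousOn fun x hx => (map_ne_zero_iff T T.injective).2 hx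
  have hHT_hom : ∀ t : ℝ, 0 < t → ∀ x, x ≠ 0 →
      H (T (t • x)) = t ^ (-(Module.finrank ℝ E : ℤ)) • H (T x) := fun t ht x hx => by
    rw [map_smul, hH_hom t ht _ ((map_ne_zero_iff T T.injective).2 hx)]
  set N : E → ℝ := fun y => ‖T.symm y‖
  have hN : Continuous N := (T.symm.toContinuousLinearEquiv.continuous).norm
  have hN_pos : ∀ y, y ≠ 0 → 0 < N y := fun y hy =>
    norm_pos_iff.2 ((map_ne_zero_iff T.symm T.symm.injective).2 hy)
  have hN_smul : ∀ t : ℝ, 0 ≤ t → ∀ y, N (t • y) = t * N y := fun t ht y => by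
    simp only [N, map_smul, norm_smul, Real.norm_of_nonneg ht]
  have hshell : T ⁻¹' (N ⁻¹' Ioo 1 (Real.exp 1)) = (‖·‖) ⁻¹' Ioo 1 (Real.exp 1) := by
    ext x
    simp [N]
  have hlog : Real.log (Real.exp 1 / 1) = 1 := by rw [div_one, Real.log_exp]
  have hone_le_e : 1 ≤ Real.exp 1 := Real.one_le_exp zero_le_one
  calc ∫ η, H (T η) ∂μ.toSphere = ∫ x in (‖·‖) ⁻¹' Ioo 1 (Real.exp 1), H (T x) ∂μ := by
        rw [setIntegral_preimage_Ioo_eq_log_smul_integral_toSphere μ hHT hHT_hom continuous_norm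
          (fun x => norm_pos_iff.2) (fun t ht x => by rw [norm_smul, Real.norm_of_nonneg ht])
          one_pos hone_le_e, hlog, one_smul]
    _ = |LinearMap.det (T : E →ₗ[ℝ] E)|⁻¹ • ∫ y in N ⁻¹' Ioo 1 (Real.exp 1), H y ∂μ := by
        rw [← hshell,
          setIntegral_preimage_comp_linearEquiv μ T H (hN.measurable measurableSet_Ioo)]
    _ = _ := by
        rw [setIntegral_preimage_Ioo_eq_log_smul_integral_toSphere μ hH hH_hom hN hN_pos hN_smul
          one_pos hone_le_e, hlog, one_smul]

end MeasureTheory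

/-- Sphere transformation lemma (`k = 0` case): for `f` continuous on `ℝⁿ \ {0}`,
positively homogeneous of degree `−n`, `T` invertible linear, and any `s ∈ ℂ`:
`∫_{S^{n−1}} f(Tη)|Tη|^s dS(η) = (1/|det T|) ∫_{S^{n−1}} f(ξ)|T⁻¹ξ|^{−s} dS(ξ)`. -/
theorem stmt1 (n : ℕ) (hn : 1 ≤ n) (f : EuclideanSpace ℝ (Fin n) → ℂ)
    (hf : ContinuousOn f {ξ : EuclideanSpace ℝ (Fin n) | ξ ≠ 0})
    (hhom : ∀ t : ℝ, 0 < t → ∀ ξ : EuclideanSpace ℝ (Fin n), ξ ≠ 0 →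
      f (t • ξ) = (t : ℂ) ^ (-(n : ℤ)) * f ξ)
    (T : EuclideanSpace ℝ (Fin n) ≃ₗ[ℝ] EuclideanSpace ℝ (Fin n))
    (s : ℂ) :
    ∫ η : sphere (0 : EuclideanSpace ℝ (Fin n)) 1,
        f (T (η : EuclideanSpace ℝ (Fin n))) *
          (‖T (η : EuclideanSpace ℝ (Fin n))‖ : ℂ) ^ s
        ∂((volume : Measure (EuclideanSpace ℝ (Fin n))).toSphere)
      = (1 / |LinearMap.det (T : EuclideanSpace ℝ (Fin n) →ₗ[ℝ] EuclideanSpace ℝ (Fin n))| : ℝ) *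
          ∫ ξ : sphere (0 : EuclideanSpace ℝ (Fin n)) 1,
            f (ξ : EuclideanSpace ℝ (Fin n)) *
              (‖T.symm (ξ : EuclideanSpace ℝ (Fin n))‖ : ℂ) ^ (-s)
            ∂((volume : Measure (EuclideanSpace ℝ (Fin n))).toSphere) := by
  have : Nontrivial (EuclideanSpace ℝ (Fin n)) :=
    Module.nontrivial_of_finrank_pos (by rw [finrank_euclideanSpace_fin]; exact hn)
  set B : EuclideanSpace ℝ (Fin n) → ℂ := fun y => f y * ((‖y‖ / ‖T.symm y‖ : ℝ) : ℂ) ^ s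
  have hB_hom : ∀ t : ℝ, 0 < t → ∀ y, y ≠ 0 →
      B (t • y) = t ^ (-(Module.finrank ℝ (EuclideanSpace ℝ (Fin n)) : ℤ)) • B y := by
    intro t ht y hy
    simp only [B, hhom t ht y hy, map_smul, norm_smul, Real.norm_of_nonneg ht.le,
      mul_div_mul_left _ _ ht.ne', finrank_euclideanSpace_fin, Complex.real_smul,
      Complex.ofReal_zpow, mul_assoc]
  calc _ = ∫ η : sphere (0 : EuclideanSpace ℝ (Fin n)) 1, B (T η) ∂volume.toSphere :=
        integral_congr_ae (.of_forall fun η => by simp [B, norm_eq_of_mem_sphere η])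
    _ = _ := by
        rw [integral_toSphere_comp_linearEquiv volume (hf.mul_cpow_norm_div_norm T.symm s)
          hB_hom T, Complex.real_smul, one_div]
        refine congrArg _ (integral_congr_ae (.of_forall fun ξ => ?_))
        simp only [norm_eq_of_mem_sphere ξ, one_div, Complex.ofReal_inv,
          Complex.inv_cpow_ofReal_nonneg (norm_nonneg _), Complex.cpow_neg]
end

section
/- Let n ≥ 1 and let g, h : ℝⁿ \ {0} → ℂ be smooth functions which are positively homogeneous of degrees γ and δ respectively, where γ + δ = 1 − n. Then for each coordinate index j ∈ {1, …, n}, ∫_{S^{n−1}} (∂_{ξ_j} g)(ξ) · h(ξ) dS(ξ) = −∫_{S^{n−1}} g(ξ) · (∂_{ξ_j} h)(ξ) dS(ξ). -/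
open MeasureTheory Metric

open Set
open scoped NNReal ENNReal Topology

section Aux


/-- Polar coordinates integral formula. -/
lemma polar_integral {E : Type*} [NormedAddCommGroup E] [NormedSpace ℝ E]
    [MeasurableSpace E] [BorelSpace E] [FiniteDimensional ℝ E] [Nontrivial E]
    (μ : Measure E) [μ.IsAddHaarMeasure] {w : E → ℂ} (hw : Integrable w μ) :
    ∫ x, w x ∂μ = ∫ ω : sphere (0:E) 1,
      (∫ r in Ioi (0:ℝ), (r ^ (Module.finrank ℝ E - 1) : ℝ) • w (r • (ω:E)))
      ∂μ.toSphere := by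
  set k := Module.finrank ℝ E - 1 with hk
  set ν := μ.toSphere.prod (Measure.volumeIoiPow k) with hν
  set f : sphere (0:E) 1 × Ioi (0:ℝ) → ℂ := fun p => w ((homeomorphUnitSphereProd E).symm p : E)
    with hf
  have hmp := μ.measurePreserving_homeomorphUnitSphereProd
  have hfc : ∀ x : ({0}ᶜ : Set E), f (homeomorphUnitSphereProd E x) = w x := by
    intro x; rw [hf]; simp
  have hms : MeasurableSet ({0}ᶜ : Set E) := (measurableSet_singleton 0).compl
  have hint0 : Integrable (fun x : ({0}ᶜ : Set E) => w x)
      (Measure.comap (Subtype.val : ({0}ᶜ : Set E) → E) μ) := by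
    have hw' : Integrable w (Measure.map (Subtype.val : ({0}ᶜ : Set E) → E)
        (Measure.comap (Subtype.val : ({0}ᶜ : Set E) → E) μ)) := by
      rw [_root_.map_comap_subtype_coe hms]; exact hw.restrict
    exact ((MeasurableEmbedding.subtype_coe hms).integrable_map_iff).1 hw'
  have hsmeas : Measurable fun p : sphere (0:E) 1 × Ioi (0:ℝ) =>
      ((homeomorphUnitSphereProd E).symm p : E) :=
    (continuous_subtype_val.comp (homeomorphUnitSphereProd E).symm.continuous).measurable
  have hsm : AEStronglyMeasurable f ν := by
    have h2 : MeasurePreserving (⇑(homeomorphUnitSphereProd E).toMeasurableEquiv.symm) ν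
        (Measure.comap (Subtype.val : ({0}ᶜ : Set E) → E) μ) :=
      MeasurePreserving.symm _ hmp
    have hmapeq : Measure.map (fun p : sphere (0:E) 1 × Ioi (0:ℝ) =>
        ((homeomorphUnitSphereProd E).symm p : E)) ν = μ.restrict {0}ᶜ := by
      have : (fun p : sphere (0:E) 1 × Ioi (0:ℝ) => ((homeomorphUnitSphereProd E).symm p : E))
          = (Subtype.val : ({0}ᶜ : Set E) → E) ∘ ⇑(homeomorphUnitSphereProd E).toMeasurableEquiv.symm := rfl
      rw [this, ← Measure.map_map measurable_subtype_coe
        (homeomorphUnitSphereProd E).toMeasurableEquiv.symm.measurable, h2.map_eq,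
        _root_.map_comap_subtype_coe hms]
    have : AEStronglyMeasurable w (Measure.map (fun p : sphere (0:E) 1 × Ioi (0:ℝ) =>
        ((homeomorphUnitSphereProd E).symm p : E)) ν) := by
      rw [hmapeq]; exact hw.aestronglyMeasurable.restrict
    exact this.comp_measurable hsmeas
  have hfint : Integrable f ν := by
    refine (hmp.integrable_comp hsm).1 ?_
    exact (integrable_congr (Filter.Eventually.of_forall fun x => (hfc x).symm)).1 hint0
  calc ∫ x, w x ∂μ = ∫ x : ({0}ᶜ : Set E), w x
          ∂(Measure.comap (Subtype.val : ({0}ᶜ : Set E) → E) μ) := by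
        rw [integral_subtype_comap hms w, restrict_compl_singleton]
    _ = ∫ p : sphere (0:E) 1 × Ioi (0:ℝ), f p ∂ν := by
        rw [← hmp.integral_comp (Homeomorph.measurableEmbedding _) f]
        exact integral_congr_ae (Filter.Eventually.of_forall fun x => (hfc x).symm)
    _ = ∫ ω : sphere (0:E) 1, ∫ r : Ioi (0:ℝ), f (ω, r)
          ∂(Measure.volumeIoiPow k) ∂μ.toSphere := integral_prod f hfint
    _ = _ := by
        refine integral_congr_ae (Filter.Eventually.of_forall fun ω => ?_)
        have h1 : ∀ r : Ioi (0:ℝ), f (ω, r) = w ((r:ℝ) • (ω:E)) := by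
          intro r; rw [hf]; simp
        set g : ℝ → ℂ := fun a => ((a ^ k).toNNReal : ℝ≥0) • w (a • (ω:E)) with hg
        rw [Measure.volumeIoiPow]
        simp only [ENNReal.ofReal]
        rw [integral_withDensity_eq_integral_smul
          ((measurable_subtype_coe.pow_const _).real_toNNReal) (fun r => f (ω, r))]
        calc ∫ x : Ioi (0:ℝ), ((x:ℝ) ^ k).toNNReal • f (ω, x)
              ∂(Measure.comap (Subtype.val : Ioi (0:ℝ) → ℝ) volume)
            = ∫ x : Ioi (0:ℝ), g (x:ℝ)
              ∂(Measure.comap (Subtype.val : Ioi (0:ℝ) → ℝ) volume) := by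
              refine integral_congr_ae (Filter.Eventually.of_forall fun x => ?_)
              rw [hg]; simp only [h1 x]
          _ = ∫ a in Ioi (0:ℝ), g a := integral_subtype_comap measurableSet_Ioi _
          _ = _ := by
              refine setIntegral_congr_fun measurableSet_Ioi fun r hr => ?_
              rw [hg]
              simp only
              rw [NNReal.smul_def, Real.coe_toNNReal _ (pow_nonneg hr.out.le _)]


lemma fderiv_homogeneous {E V : Type*} [NormedAddCommGroup E] [NormedSpace ℝ E]
    [NormedAddCommGroup V] [NormedSpace ℝ V]
    {F : E → V} {c : ℝ}
    (hF : ∀ x : E, x ≠ 0 → DifferentiableAt ℝ F x)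
    (hFhom : ∀ t : ℝ, 0 < t → ∀ x : E, x ≠ 0 → F (t • x) = (t ^ c : ℝ) • F x)
    {r : ℝ} (hr : 0 < r) {ω : E} (hω : ω ≠ 0) (v : E) :
    fderiv ℝ F (r • ω) v = (r ^ (c - 1) : ℝ) • fderiv ℝ F ω v := by
  have hrω : r • ω ≠ 0 := smul_ne_zero hr.ne' hω
  have hsc : HasFDerivAt (fun x : E => r • x) (r • ContinuousLinearMap.id ℝ E) ω := by
    exact (r • ContinuousLinearMap.id ℝ E).hasFDerivAt (x := ω)
  have hG1 : HasFDerivAt (fun x : E => F (r • x))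
      ((fderiv ℝ F (r • ω)).comp (r • ContinuousLinearMap.id ℝ E)) ω :=
    ((hF _ hrω).hasFDerivAt).comp ω hsc
  have hev : (fun x : E => F (r • x)) =ᶠ[nhds ω] fun x => (r ^ c : ℝ) • F x := by
    filter_upwards [IsOpen.mem_nhds isOpen_ne hω] with x hx
    exact hFhom r hr x hx
  have h2 : fderiv ℝ (fun x : E => F (r • x)) ω = (r ^ c : ℝ) • fderiv ℝ F ω := by
    rw [Filter.EventuallyEq.fderiv_eq hev]
    exact fderiv_const_smul (hF ω hω) _
  have h3 := hG1.fderiv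
  rw [h2] at h3
  have h4 := congrArg (fun (L : E →L[ℝ] V) => L v) h3.symm
  simp only [ContinuousLinearMap.coe_comp', Function.comp_apply, ContinuousLinearMap.smul_apply,
    ContinuousLinearMap.coe_smul', Pi.smul_apply, ContinuousLinearMap.coe_id', id_eq] at h4
  -- h4 : fderiv F (r•ω) (r • v) = r^c • fderiv F ω v
  have h5 : r • fderiv ℝ F (r • ω) v = (r ^ c : ℝ) • fderiv ℝ F ω v := by
    rw [← (fderiv ℝ F (r • ω)).map_smul]; exact h4
  have : fderiv ℝ F (r • ω) v = r⁻¹ • (r ^ c : ℝ) • fderiv ℝ F ω v := by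
    rw [← h5, smul_smul, inv_mul_cancel₀ hr.ne', one_smul]
  rw [this, smul_smul, Real.rpow_sub hr, Real.rpow_one, div_eq_mul_inv, mul_comm]


end Aux

/-- Integration by parts on the sphere (Okikiolu, Lemma C1): if `g, h` are smooth
on `ℝⁿ \ {0}` and positively homogeneous of degrees `γ, δ` with `γ + δ = 1 − n`,
then for each coordinate `j`,
`∫_{S^{n−1}} (∂_{ξ_j} g) h dS = −∫_{S^{n−1}} g (∂_{ξ_j} h) dS`. -/
theorem stmt3 (n : ℕ) (hn : 1 ≤ n) (g h : EuclideanSpace ℝ (Fin n) → ℂ)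
    (γ δ : ℂ) (hγδ : γ + δ = 1 - n)
    (hg : ContDiffOn ℝ (⊤ : ℕ∞) g {ξ : EuclideanSpace ℝ (Fin n) | ξ ≠ 0})
    (hh : ContDiffOn ℝ (⊤ : ℕ∞) h {ξ : EuclideanSpace ℝ (Fin n) | ξ ≠ 0})
    (hghom : ∀ t : ℝ, 0 < t → ∀ ξ : EuclideanSpace ℝ (Fin n), ξ ≠ 0 →
      g (t • ξ) = (t : ℂ) ^ γ * g ξ)
    (hhhom : ∀ t : ℝ, 0 < t → ∀ ξ : EuclideanSpace ℝ (Fin n), ξ ≠ 0 →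
      h (t • ξ) = (t : ℂ) ^ δ * h ξ)
    (j : Fin n) :
    ∫ ξ : sphere (0 : EuclideanSpace ℝ (Fin n)) 1,
        (fderiv ℝ g (ξ : EuclideanSpace ℝ (Fin n)) (EuclideanSpace.single j (1 : ℝ))) *
          h (ξ : EuclideanSpace ℝ (Fin n))
        ∂((volume : Measure (EuclideanSpace ℝ (Fin n))).toSphere)
      = -∫ ξ : sphere (0 : EuclideanSpace ℝ (Fin n)) 1,
          g (ξ : EuclideanSpace ℝ (Fin n)) *
            (fderiv ℝ h (ξ : EuclideanSpace ℝ (Fin n)) (EuclideanSpace.single j (1 : ℝ)))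
          ∂((volume : Measure (EuclideanSpace ℝ (Fin n))).toSphere) := by
  haveI : Nonempty (Fin n) := ⟨⟨0, hn⟩⟩
  haveI : Nontrivial (EuclideanSpace ℝ (Fin n)) := by
    refine nontrivial_iff.2 ⟨EuclideanSpace.single j 1, 0, fun hc => ?_⟩
    have := congrArg (fun x => x j) hc
    simp [EuclideanSpace.single_apply] at this
  set v : EuclideanSpace ℝ (Fin n) := EuclideanSpace.single j (1 : ℝ) with hv
  set s : Set (EuclideanSpace ℝ (Fin n)) := {ξ : EuclideanSpace ℝ (Fin n) | ξ ≠ 0} with hs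
  have hso : IsOpen s := isOpen_ne
  -- differentiability facts
  have hgd : ∀ x : EuclideanSpace ℝ (Fin n), x ≠ 0 → DifferentiableAt ℝ g x := fun x hx =>
    (hg.contDiffAt (hso.mem_nhds hx)).differentiableAt (by simp)
  have hhd : ∀ x : EuclideanSpace ℝ (Fin n), x ≠ 0 → DifferentiableAt ℝ h x := fun x hx =>
    (hh.contDiffAt (hso.mem_nhds hx)).differentiableAt (by simp)
  set F : EuclideanSpace ℝ (Fin n) → ℂ := fun ξ => g ξ * h ξ with hF
  have hFd : ∀ x : EuclideanSpace ℝ (Fin n), x ≠ 0 → DifferentiableAt ℝ F x := fun x hx => (hgd x hx).mul (hhd x hx)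
  have hFhom : ∀ t : ℝ, 0 < t → ∀ x : EuclideanSpace ℝ (Fin n), x ≠ 0 → F (t • x) = (t ^ ((1:ℝ) - n) : ℝ) • F x := by
    intro t ht x hx
    have htC : (t : ℂ) ≠ 0 := by exact_mod_cast ht.ne'
    rw [hF]
    simp only
    rw [hghom t ht x hx, hhhom t ht x hx]
    have : (t:ℂ) ^ γ * g x * ((t:ℂ) ^ δ * h x) = (t:ℂ) ^ (γ + δ) * (g x * h x) := by
      rw [Complex.cpow_add _ _ htC]; ring
    rw [this, hγδ]
    have h2 : ((1:ℂ) - n) = (((1:ℝ) - n : ℝ) : ℂ) := by push_cast; ring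
    rw [h2, ← Complex.ofReal_cpow ht.le, Complex.real_smul]
  -- derivative of F as product
  have hFmul : ∀ x : EuclideanSpace ℝ (Fin n), x ≠ 0 →
      fderiv ℝ F x v = fderiv ℝ g x v * h x + g x * fderiv ℝ h x v := by
    intro x hx
    have := ((hgd x hx).hasFDerivAt.mul (hhd x hx).hasFDerivAt).fderiv
    rw [hF]
    rw [show (fun ξ => g ξ * h ξ) = g * h from rfl, this]
    simp only [ContinuousLinearMap.add_apply, ContinuousLinearMap.smul_apply, smul_eq_mul]
    ring
  -- the bump function
  set f : ContDiffBump (3:ℝ) := ⟨1, 2, one_pos, one_lt_two⟩ with hfdef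
  have hball : ball (3:ℝ) 2 = Ioo 1 5 := by rw [Real.ball_eq_Ioo]; norm_num
  have hsuppf : Function.support f = Ioo 1 5 := by rw [f.support_eq]; exact hball
  have hφ0 : ∀ r : ℝ, r < 1 → f r = 0 := by
    intro r hr
    have : r ∉ Function.support f := by rw [hsuppf]; rintro ⟨h1, _⟩; linarith
    simpa [Function.mem_support, not_not] using this
  -- the compactly supported test function u
  set u : EuclideanSpace ℝ (Fin n) → ℂ := fun ξ => f ‖ξ‖ • F ξ with hu
  have hNd : ∀ x : EuclideanSpace ℝ (Fin n), x ≠ 0 →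
      DifferentiableAt ℝ (fun y : EuclideanSpace ℝ (Fin n) => ‖y‖) x :=
    fun x hx => (contDiffAt_norm ℝ (n := 1) hx).differentiableAt one_ne_zero
  have hNhom : ∀ t : ℝ, 0 < t → ∀ x : EuclideanSpace ℝ (Fin n), x ≠ 0 →
      ‖t • x‖ = (t ^ (1:ℝ) : ℝ) • ‖x‖ := by
    intro t ht x hx
    rw [norm_smul, Real.rpow_one, smul_eq_mul, Real.norm_eq_abs, abs_of_pos ht]
  have husm : ContDiff ℝ 2 u := by
    rw [contDiff_iff_contDiffAt]
    intro ξ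
    by_cases hξ : ‖ξ‖ < 1
    · have hev : u =ᶠ[nhds ξ] fun _ => (0:ℂ) := by
        filter_upwards [IsOpen.mem_nhds (isOpen_lt continuous_norm continuous_const) hξ] with y hy
        rw [hu]; simp only; rw [hφ0 _ hy, zero_smul]
      exact (contDiffAt_const (c := (0:ℂ))).congr_of_eventuallyEq hev
    · have hx0 : ξ ≠ 0 := by intro h0; exact hξ (by simp [h0])
      have h1 : ContDiffAt ℝ 2 (fun y : EuclideanSpace ℝ (Fin n) => f ‖y‖) ξ :=
        (f.contDiff (n := 2)).contDiffAt.comp ξ (contDiffAt_norm ℝ hx0)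
      have h2 : ContDiffAt ℝ 2 F ξ :=
        ((hg.contDiffAt (hso.mem_nhds hx0)).mul (hh.contDiffAt (hso.mem_nhds hx0))).of_le (WithTop.coe_le_coe.2 le_top)
      exact h1.smul h2
  have husupp : HasCompactSupport u := by
    refine HasCompactSupport.intro (isCompact_closedBall (0 : EuclideanSpace ℝ (Fin n)) 5)
      fun x hx => ?_
    have h5 : (5:ℝ) < ‖x‖ := by
      simpa [mem_closedBall, dist_zero_right, not_le] using hx
    have hf0 : f ‖x‖ = 0 := by
      have : ‖x‖ ∉ Function.support f := by rw [hsuppf]; rintro ⟨_, h2⟩; linarith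
      simpa [Function.mem_support, not_not] using this
    rw [hu]; simp only; rw [hf0, zero_smul]
  -- the integral of the derivative of u vanishes
  have hfderiv_cont : Continuous fun x => fderiv ℝ u x v := by
    have := (husm.fderiv_right (m := 1) (by norm_num)).continuous
    exact this.clm_apply continuous_const
  have hzint : Integrable (fun x => fderiv ℝ u x v)
      (volume : Measure (EuclideanSpace ℝ (Fin n))) :=
    hfderiv_cont.integrable_of_hasCompactSupport (husupp.fderiv_apply ℝ v)
  have huint : Integrable u (volume : Measure (EuclideanSpace ℝ (Fin n))) :=
    husm.continuous.integrable_of_hasCompactSupport husupp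
  have hz : ∫ x, fderiv ℝ u x v ∂(volume : Measure (EuclideanSpace ℝ (Fin n))) = 0 := by
    have h1 : Integrable
        (fun x => fderiv ℝ (fun _ : EuclideanSpace ℝ (Fin n) => (1:ℂ)) x v * u x) volume := by
      simpa [fderiv_const] using (integrable_zero (EuclideanSpace ℝ (Fin n)) ℂ
        (volume : Measure (EuclideanSpace ℝ (Fin n))))
    have h2 : Integrable (fun x => (1:ℂ) * fderiv ℝ u x v) volume := by simpa using hzint
    have h3 : Integrable (fun x => (1:ℂ) * u x) volume := by simpa using huint
    have := integral_mul_fderiv_eq_neg_fderiv_mul_of_integrable h1 h2 h3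
      (fun x _ => differentiableAt_const _) (fun x _ => husm.differentiable (by norm_num) x)
    simpa [fderiv_const] using this
  -- radial weight function and its integral
  set q : ℝ → ℝ := fun r => f r * r⁻¹ with hq
  have hqcont : Continuous q := by
    rw [continuous_iff_continuousAt]
    intro r
    by_cases hr : r < 1
    · have hev : q =ᶠ[nhds r] fun _ => (0:ℝ) := by
        filter_upwards [IsOpen.mem_nhds isOpen_Iio hr] with y hy
        rw [hq]; simp only; rw [hφ0 _ hy, zero_mul]
      exact hev.continuousAt
    · push_neg at hr
      have hr0 : r ≠ 0 := by intro h0; rw [h0] at hr; linarith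
      exact (f.continuous.continuousAt.mul (continuousAt_inv₀ hr0))
  have hqsupp : HasCompactSupport q := by
    refine HasCompactSupport.intro (isCompact_Icc (a := (1:ℝ)) (b := 5)) fun x hx => ?_
    have hf0 : f x = 0 := by
      have : x ∉ Function.support f := by
        rw [hsuppf]; intro hm; exact hx ⟨hm.1.le, hm.2.le⟩
      simpa [Function.mem_support, not_not] using this
    rw [hq]; simp only; rw [hf0, zero_mul]
  have hqint : IntegrableOn q (Ioi (0:ℝ)) volume :=
    (hqcont.integrable_of_hasCompactSupport hqsupp).integrableOn
  have hdercont : Continuous (deriv (f : ℝ → ℝ)) :=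
    (f.contDiff (n := 2)).continuous_deriv (by norm_num)
  have hderint : IntegrableOn (deriv (f : ℝ → ℝ)) (Ioi (0:ℝ)) volume :=
    (hdercont.integrable_of_hasCompactSupport f.hasCompactSupport.deriv).integrableOn
  have hderzero : ∫ r in Ioi (0:ℝ), deriv (f : ℝ → ℝ) r = 0 := by
    rw [HasCompactSupport.integral_Ioi_deriv_eq (f.contDiff (n := 1)) f.hasCompactSupport 0,
      hφ0 0 (by norm_num), neg_zero]
  have hqnn : ∀ r : ℝ, 0 ≤ q r := by
    intro r
    by_cases hr : r ∈ Ioo (1:ℝ) 5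
    · exact mul_nonneg f.nonneg (inv_nonneg.2 (by linarith [hr.1]))
    · have hf0 : f r = 0 := by
        have : r ∉ Function.support f := by rw [hsuppf]; exact hr
        simpa [Function.mem_support, not_not] using this
      rw [hq]; simp only; rw [hf0, zero_mul]
  have hI2pos : 0 < ∫ r in Ioi (0:ℝ), q r := by
    refine (setIntegral_pos_iff_support_of_nonneg_ae
      (Filter.Eventually.of_forall fun r => hqnn r) hqint).2 ?_
    have hsub : Ioo (2:ℝ) 4 ⊆ Function.support q ∩ Ioi 0 := by
      intro x hx
      have hx0 : (0:ℝ) < x := by linarith [hx.1]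
      have hf1 : f x = 1 := by
        refine f.one_of_mem_closedBall ?_
        rw [mem_closedBall, Real.dist_eq]
        show |x - 3| ≤ 1
        rw [abs_le]
        refine ⟨by linarith [hx.1], by linarith [hx.2]⟩
      refine ⟨?_, hx0⟩
      rw [Function.mem_support, hq]; simp only; rw [hf1, one_mul]
      exact inv_ne_zero hx0.ne'
    calc (0:ℝ≥0∞) < volume (Ioo (2:ℝ) 4) := by rw [Real.volume_Ioo]; norm_num
      _ ≤ volume (Function.support q ∩ Ioi 0) := measure_mono hsub
  -- sphere points are nonzero
  have hωne : ∀ ω : sphere (0 : EuclideanSpace ℝ (Fin n)) 1,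
      (ω : EuclideanSpace ℝ (Fin n)) ≠ 0 := fun ω => ne_of_mem_sphere ω.2 one_ne_zero
  have hnω : ∀ ω : sphere (0 : EuclideanSpace ℝ (Fin n)) 1,
      ‖(ω : EuclideanSpace ℝ (Fin n))‖ = 1 := fun ω => mem_sphere_zero_iff_norm.1 ω.2
  -- the key radial computation
  have key : ∀ ω : sphere (0 : EuclideanSpace ℝ (Fin n)) 1,
      ∫ r in Ioi (0:ℝ), (r ^ (n - 1) : ℝ) •
          fderiv ℝ u (r • (ω : EuclideanSpace ℝ (Fin n))) v
        = (∫ r in Ioi (0:ℝ), q r) • fderiv ℝ F (ω : EuclideanSpace ℝ (Fin n)) v := by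
    intro ω
    set b : ℂ := fderiv ℝ F (ω : EuclideanSpace ℝ (Fin n)) v with hb
    set a : ℂ := F (ω : EuclideanSpace ℝ (Fin n)) with ha
    set Nv : ℝ := fderiv ℝ (fun y : EuclideanSpace ℝ (Fin n) => ‖y‖)
      (ω : EuclideanSpace ℝ (Fin n)) v with hNv
    have hpoint : ∀ r ∈ Ioi (0:ℝ),
        (r ^ (n - 1) : ℝ) • fderiv ℝ u (r • (ω : EuclideanSpace ℝ (Fin n))) v
          = q r • b + deriv (f : ℝ → ℝ) r • (Nv • a) := by
      intro r hr
      rw [mem_Ioi] at hr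
      set x : EuclideanSpace ℝ (Fin n) := r • (ω : EuclideanSpace ℝ (Fin n)) with hxdef
      have hx0 : x ≠ 0 := smul_ne_zero hr.ne' (hωne ω)
      have hnx : ‖x‖ = r := by
        rw [hxdef, norm_smul, hnω ω, Real.norm_eq_abs, abs_of_pos hr, mul_one]
      have hNfd : HasFDerivAt (fun y : EuclideanSpace ℝ (Fin n) => ‖y‖)
          (fderiv ℝ (fun y : EuclideanSpace ℝ (Fin n) => ‖y‖) x) x := (hNd x hx0).hasFDerivAt
      have hder : HasDerivAt (f : ℝ → ℝ) (deriv (f : ℝ → ℝ) ‖x‖) ‖x‖ :=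
        (((f.contDiff (n := 1)).differentiable (by norm_num)) ‖x‖).hasDerivAt
      have hcomp : HasFDerivAt (fun y : EuclideanSpace ℝ (Fin n) => f ‖y‖)
          ((deriv (f : ℝ → ℝ) ‖x‖) • fderiv ℝ (fun y : EuclideanSpace ℝ (Fin n) => ‖y‖) x) x :=
        hder.comp_hasFDerivAt x hNfd
      have hprod := (hcomp.smul ((hFd x hx0).hasFDerivAt)).fderiv
      have hux : fderiv ℝ u x v = f ‖x‖ • fderiv ℝ F x v
          + (deriv (f : ℝ → ℝ) ‖x‖ *
              fderiv ℝ (fun y : EuclideanSpace ℝ (Fin n) => ‖y‖) x v) • F x := by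
        rw [hu]
        rw [show (fun ξ : EuclideanSpace ℝ (Fin n) => f ‖ξ‖ • F ξ) = ((fun y : EuclideanSpace ℝ (Fin n) => f ‖y‖) • F : EuclideanSpace ℝ (Fin n) → ℂ) from rfl, hprod]
        simp [ContinuousLinearMap.smulRight_apply]
      have hFx : fderiv ℝ F x v = (r ^ ((1:ℝ) - n - 1) : ℝ) • b :=
        fderiv_homogeneous hFd hFhom hr (hωne ω) v
      have hNx : fderiv ℝ (fun y : EuclideanSpace ℝ (Fin n) => ‖y‖) x v = Nv := by
        have := fderiv_homogeneous hNd hNhom hr (hωne ω) v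
        rw [hxdef] at *
        rw [this, sub_self, Real.rpow_zero, one_smul]
      have hFval : F x = (r ^ ((1:ℝ) - n) : ℝ) • a := hFhom r hr _ (hωne ω)
      have hpow1 : (r ^ (n - 1) : ℝ) * r ^ ((1:ℝ) - n - 1) = r⁻¹ := by
        rw [← Real.rpow_natCast r (n - 1), Nat.cast_sub hn, Nat.cast_one,
          ← Real.rpow_add hr]
        rw [show ((n:ℝ) - 1 + ((1:ℝ) - n - 1)) = -1 by ring, Real.rpow_neg_one]
      have hpow2 : (r ^ (n - 1) : ℝ) * r ^ ((1:ℝ) - n) = 1 := by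
        rw [← Real.rpow_natCast r (n - 1), Nat.cast_sub hn, Nat.cast_one,
          ← Real.rpow_add hr]
        rw [show ((n:ℝ) - 1 + ((1:ℝ) - n)) = 0 by ring, Real.rpow_zero]
      rw [hux, hnx, hFx, hNx, hFval]
      rw [smul_add, smul_smul, smul_smul, smul_smul, smul_smul, smul_smul]
      congr 1
      · congr 1
        rw [hq]; simp only
        rw [mul_right_comm, hpow1, mul_comm]
      · congr 1
        rw [mul_right_comm, hpow2, one_mul]
    rw [setIntegral_congr_fun measurableSet_Ioi hpoint]
    rw [integral_add (hqint.smul_const b) (hderint.smul_const (Nv • a)),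
      integral_smul_const, integral_smul_const, hderzero, zero_smul, add_zero]
  -- apply polar coordinates
  haveI : CompactSpace (sphere (0 : EuclideanSpace ℝ (Fin n)) 1) :=
    isCompact_iff_compactSpace.1 (isCompact_sphere _ _)
  have hpolar := polar_integral (volume : Measure (EuclideanSpace ℝ (Fin n))) hzint
  simp only [finrank_euclideanSpace_fin] at hpolar
  rw [hz] at hpolar
  have hkey : ∫ ω : sphere (0 : EuclideanSpace ℝ (Fin n)) 1,
      (∫ r in Ioi (0:ℝ), (r ^ (n - 1) : ℝ) • fderiv ℝ u (r • (ω : EuclideanSpace ℝ (Fin n))) v)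
      ∂(volume : Measure (EuclideanSpace ℝ (Fin n))).toSphere
      = (∫ r in Ioi (0:ℝ), q r) •
        ∫ ω : sphere (0 : EuclideanSpace ℝ (Fin n)) 1,
          fderiv ℝ F (ω : EuclideanSpace ℝ (Fin n)) v
          ∂(volume : Measure (EuclideanSpace ℝ (Fin n))).toSphere := by
    rw [← integral_smul]
    exact integral_congr_ae (Filter.Eventually.of_forall fun ω => key ω)
  rw [hkey] at hpolar
  have hSzero : ∫ ω : sphere (0 : EuclideanSpace ℝ (Fin n)) 1,
      fderiv ℝ F (ω : EuclideanSpace ℝ (Fin n)) v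
      ∂(volume : Measure (EuclideanSpace ℝ (Fin n))).toSphere = 0 := by
    rcases smul_eq_zero.1 hpolar.symm with hc | hc
    · exact absurd hc hI2pos.ne'
    · exact hc
  have hc1 : Continuous fun ω : sphere (0 : EuclideanSpace ℝ (Fin n)) 1 =>
      fderiv ℝ g (ω : EuclideanSpace ℝ (Fin n)) v * h (ω : EuclideanSpace ℝ (Fin n)) := by
    have cg : Continuous fun ω : sphere (0 : EuclideanSpace ℝ (Fin n)) 1 =>
        fderiv ℝ g (ω : EuclideanSpace ℝ (Fin n)) :=
      (hg.continuousOn_fderiv_of_isOpen hso (by simp)).comp_continuous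
        continuous_subtype_val (fun ω => hωne ω)
    have ch : Continuous fun ω : sphere (0 : EuclideanSpace ℝ (Fin n)) 1 =>
        h (ω : EuclideanSpace ℝ (Fin n)) :=
      hh.continuousOn.comp_continuous continuous_subtype_val (fun ω => hωne ω)
    exact (cg.clm_apply continuous_const).mul ch
  have hc2 : Continuous fun ω : sphere (0 : EuclideanSpace ℝ (Fin n)) 1 =>
      g (ω : EuclideanSpace ℝ (Fin n)) * fderiv ℝ h (ω : EuclideanSpace ℝ (Fin n)) v := by
    have chd : Continuous fun ω : sphere (0 : EuclideanSpace ℝ (Fin n)) 1 =>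
        fderiv ℝ h (ω : EuclideanSpace ℝ (Fin n)) :=
      (hh.continuousOn_fderiv_of_isOpen hso (by simp)).comp_continuous
        continuous_subtype_val (fun ω => hωne ω)
    have cg0 : Continuous fun ω : sphere (0 : EuclideanSpace ℝ (Fin n)) 1 =>
        g (ω : EuclideanSpace ℝ (Fin n)) :=
      hg.continuousOn.comp_continuous continuous_subtype_val (fun ω => hωne ω)
    exact cg0.mul (chd.clm_apply continuous_const)
  have hfin1 : Integrable (fun ω : sphere (0 : EuclideanSpace ℝ (Fin n)) 1 =>
      fderiv ℝ g (ω : EuclideanSpace ℝ (Fin n)) v * h (ω : EuclideanSpace ℝ (Fin n)))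
      (volume : Measure (EuclideanSpace ℝ (Fin n))).toSphere :=
    hc1.integrable_of_hasCompactSupport
      (IsCompact.of_isClosed_subset isCompact_univ (isClosed_tsupport _) (subset_univ _))
  have hfin2 : Integrable (fun ω : sphere (0 : EuclideanSpace ℝ (Fin n)) 1 =>
      g (ω : EuclideanSpace ℝ (Fin n)) * fderiv ℝ h (ω : EuclideanSpace ℝ (Fin n)) v)
      (volume : Measure (EuclideanSpace ℝ (Fin n))).toSphere :=
    hc2.integrable_of_hasCompactSupport
      (IsCompact.of_isClosed_subset isCompact_univ (isClosed_tsupport _) (subset_univ _))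
  have hsplit : (∫ ω : sphere (0 : EuclideanSpace ℝ (Fin n)) 1,
      fderiv ℝ g (ω : EuclideanSpace ℝ (Fin n)) v * h (ω : EuclideanSpace ℝ (Fin n))
      ∂(volume : Measure (EuclideanSpace ℝ (Fin n))).toSphere)
      + (∫ ω : sphere (0 : EuclideanSpace ℝ (Fin n)) 1,
      g (ω : EuclideanSpace ℝ (Fin n)) * fderiv ℝ h (ω : EuclideanSpace ℝ (Fin n)) v
      ∂(volume : Measure (EuclideanSpace ℝ (Fin n))).toSphere) = 0 := by
    rw [← integral_add hfin1 hfin2, ← hSzero]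
    exact integral_congr_ae (Filter.Eventually.of_forall fun ω => (hFmul _ (hωne ω)).symm)
  exact eq_neg_of_add_eq_zero_left hsplit
end

section
/- Let W ⊆ ℂ be open, let α, g : W → ℂ be holomorphic, and let c ∈ ℂ be such that α(z) + c ≠ 0 for all z ∈ W. For each non-negative integer k, define holomorphic functions c_{k,l} : W → ℂ (0 ≤ l ≤ k) by the requirement that for every real t > 0 and z ∈ W, ∂_z^k (t^{α(z)} g(z)) = Σ_{l=0}^{k} c_{k,l}(z) · t^{α(z)} (log t)^l. (These are uniquely determined; explicitly c_{0,0} = g, c_{k+1,k+1} = α' · c_{k,k}, c_{k+1,l} = α' · c_{k,l−1} + c_{k,l}' for 1 ≤ l ≤ k, and c_{k+1,0} = c_{k,0}'.) Then for every k ≥ 0 and z ∈ W, d^k/dz^k ( −g(z)/(α(z) + c) ) = Σ_{l=0}^{k} ( (−1)^{l+1} l! / (α(z) + c)^{l+1} ) · c_{k,l}(z). -/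
/-!
Put `x = log t`, so that `t ^ α(w) = exp (x α(w))`. Differentiating
`exp (x α) Σ_l c_{k,l} x ^ l` shows that
`Σ_l c_{k+1,l} x ^ l = Σ_l (c_{k,l}' + α' c_{k,l-1}) x ^ l` for every real `x`, so the
coefficients obey that recurrence (`logCoeff`). The `l`-th derivative of `a ↦ -1/a` is
`A_l(a) = (-1)^(l+1) l! / a^(l+1)`, so differentiating `Σ_l A_l(α + c) c_{k,l}` gives
`Σ_l (A_l(α + c) c_{k,l}' + A_{l+1}(α + c) α' c_{k,l})`, which regroups by the same
recurrence into `Σ_l A_l(α + c) c_{k+1,l}`.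
-/

open Finset Set Nat

theorem eq_of_forall_sum_mul_ofReal_pow_eq {n : ℕ} {a b : ℕ → ℂ}
    (h : ∀ x : ℝ, ∑ l ∈ range n, a l * (x : ℂ) ^ l = ∑ l ∈ range n, b l * (x : ℂ) ^ l) :
    ∀ l < n, a l = b l := by
  have hpoly : ∑ l ∈ range n, Polynomial.C (a l) * Polynomial.X ^ l
      = ∑ l ∈ range n, Polynomial.C (b l) * Polynomial.X ^ l := by
    apply Polynomial.eq_of_infinite_eval_eq
    apply (Set.infinite_range_of_injective Complex.ofReal_injective).mono
    rintro _ ⟨x, rfl⟩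
    simpa [Polynomial.eval_finsetSum] using h x
  intro l hl
  simpa [Polynomial.finsetSum_coeff, Polynomial.coeff_C_mul_X_pow, hl] using
    congrArg (Polynomial.coeff · l) hpoly

theorem eqOn_iteratedDeriv_succ {𝕜 E : Type*} [NontriviallyNormedField 𝕜]
    [NormedAddCommGroup E] [NormedSpace 𝕜 E] {f F F' : 𝕜 → E} {s : Set 𝕜} {k : ℕ}
    (hs : IsOpen s) (hF : EqOn (iteratedDeriv k f) F s)
    (hF' : ∀ z ∈ s, HasDerivAt F (F' z) z) :
    EqOn (iteratedDeriv (k + 1) f) F' s := by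
  intro z hz
  rw [iteratedDeriv_succ, (hF.eventuallyEq_of_mem (hs.mem_nhds hz)).deriv_eq, (hF' z hz).deriv]

theorem ofReal_exp_cpow (x : ℝ) (y : ℂ) : (Real.exp x : ℂ) ^ y = Complex.exp (x * y) := by
  rw [Complex.cpow_def_of_ne_zero (by exact_mod_cast (Real.exp_pos x).ne'),
    ← Complex.ofReal_log (Real.exp_pos x).le, Real.log_exp]

noncomputable def negInvDeriv (l : ℕ) (a : ℂ) : ℂ :=
  (-1) ^ (l + 1) * (l ! : ℂ) / a ^ (l + 1)

theorem hasDerivAt_negInvDeriv (l : ℕ) {a : ℂ} (ha : a ≠ 0) :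
    HasDerivAt (negInvDeriv l) (negInvDeriv (l + 1) a) a := by
  refine ((hasDerivAt_const a ((-1 : ℂ) ^ (l + 1) * (l ! : ℂ))).div (hasDerivAt_pow (l + 1) a)
    (pow_ne_zero _ ha)).congr_deriv ?_
  simp only [negInvDeriv, factorial_succ, add_tsub_cancel_right]
  field_simp
  push_cast
  ring

noncomputable def logCoeff (α g : ℂ → ℂ) : ℕ → ℕ → ℂ → ℂ
  | 0, 0 => g
  | 0, _ + 1 => 0
  | k + 1, 0 => deriv (logCoeff α g k 0)
  | k + 1, l + 1 => fun w => deriv (logCoeff α g k (l + 1)) w + deriv α w * logCoeff α g k l w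

section logCoeff

variable {α g : ℂ → ℂ}

theorem logCoeff_of_lt {k l : ℕ} (h : k < l) : logCoeff α g k l = 0 := by
  induction k generalizing l with
  | zero => obtain ⟨l, rfl⟩ := Nat.exists_eq_add_of_lt h; rfl
  | succ k ih =>
    obtain ⟨l, rfl⟩ := Nat.exists_eq_succ_of_ne_zero (by omega : l ≠ 0)
    funext w
    simp [logCoeff, ih (by omega : k < l), ih (by omega : k < l + 1)]

theorem sum_mul_logCoeff_succ (v : ℕ → ℂ) (k : ℕ) (w : ℂ) :
    ∑ l ∈ range (k + 2), v l * logCoeff α g (k + 1) l w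
      = ∑ l ∈ range (k + 1),
          (v l * deriv (logCoeff α g k l) w + v (l + 1) * deriv α w * logCoeff α g k l w) := by
  have hlast : v (k + 1) * deriv (logCoeff α g k (k + 1)) w = 0 := by
    simp [logCoeff_of_lt (lt_add_one k)]
  rw [sum_range_succ' (fun l => v l * logCoeff α g (k + 1) l w), sum_add_distrib,
    ← add_zero (∑ l ∈ range (k + 1), v l * deriv (logCoeff α g k l) w), ← hlast,
    ← sum_range_succ, sum_range_succ' (fun l => v l * deriv (logCoeff α g k l) w)]
  simp only [logCoeff, mul_add, sum_add_distrib, mul_assoc]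
  ring

variable {W : Set ℂ}

theorem differentiableOn_logCoeff (hW : IsOpen W) (hα : DifferentiableOn ℂ α W)
    (hg : DifferentiableOn ℂ g W) : ∀ k l, DifferentiableOn ℂ (logCoeff α g k l) W
  | 0, 0 => hg
  | 0, _ + 1 => differentiableOn_const 0
  | k + 1, 0 => (differentiableOn_logCoeff hW hα hg k 0).deriv hW
  | k + 1, l + 1 => ((differentiableOn_logCoeff hW hα hg k (l + 1)).deriv hW).add
      ((hα.deriv hW).mul (differentiableOn_logCoeff hW hα hg k l))

theorem iteratedDeriv_cexp_mul_eqOn (hW : IsOpen W) (hα : DifferentiableOn ℂ α W)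
    (hg : DifferentiableOn ℂ g W) (x : ℂ) (k : ℕ) :
    EqOn (iteratedDeriv k fun w => Complex.exp (x * α w) * g w)
      (fun w => Complex.exp (x * α w) * ∑ l ∈ range (k + 1), x ^ l * logCoeff α g k l w)
      W := by
  induction k with
  | zero => intro z _; simp [logCoeff]
  | succ k ih =>
    refine eqOn_iteratedDeriv_succ hW ih fun z hz => ?_
    have hαz := (hα.differentiableAt (hW.mem_nhds hz)).hasDerivAt
    have hsum := HasDerivAt.fun_sum fun l (_ : l ∈ range (k + 1)) =>
      (((differentiableOn_logCoeff hW hα hg k l).differentiableAt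
        (hW.mem_nhds hz)).hasDerivAt).const_mul (x ^ l)
    refine ((hαz.const_mul x).cexp.mul hsum).congr_deriv ?_
    rw [sum_mul_logCoeff_succ]
    simp only [mul_sum, ← sum_add_distrib]
    exact sum_congr rfl fun l _ => by ring

theorem iteratedDeriv_neg_div_add_const_eqOn (hW : IsOpen W) (hα : DifferentiableOn ℂ α W)
    (hg : DifferentiableOn ℂ g W) {c : ℂ} (hne : ∀ z ∈ W, α z + c ≠ 0) (k : ℕ) :
    EqOn (iteratedDeriv k fun w => -g w / (α w + c))
      (fun w => ∑ l ∈ range (k + 1), negInvDeriv l (α w + c) * logCoeff α g k l w) W := by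
  induction k with
  | zero => intro z _; simp [logCoeff, negInvDeriv]; ring
  | succ k ih =>
    refine eqOn_iteratedDeriv_succ hW ih fun z hz => ?_
    have hαz := (hα.differentiableAt (hW.mem_nhds hz)).hasDerivAt
    refine (HasDerivAt.fun_sum fun l (_ : l ∈ range (k + 1)) =>
      ((hasDerivAt_negInvDeriv l (hne z hz)).comp z (hαz.add_const c)).mul
        ((differentiableOn_logCoeff hW hα hg k l).differentiableAt
          (hW.mem_nhds hz)).hasDerivAt).congr_deriv ?_
    rw [sum_mul_logCoeff_succ]
    exact sum_congr rfl fun l _ => by rw [Function.comp_apply]; ring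

theorem eq_logCoeff_of_iteratedDeriv_cpow_mul (hW : IsOpen W) (hα : DifferentiableOn ℂ α W)
    (hg : DifferentiableOn ℂ g W) {k : ℕ} {z : ℂ} (hz : z ∈ W) {c : ℕ → ℂ}
    (hc : ∀ t : ℝ, 0 < t → iteratedDeriv k (fun w => (t : ℂ) ^ (α w) * g w) z
        = ∑ l ∈ range (k + 1), c l * (t : ℂ) ^ (α z) * (Real.log t : ℂ) ^ l) :
    ∀ l ≤ k, c l = logCoeff α g k l z := by
  intro l hl
  refine eq_of_forall_sum_mul_ofReal_pow_eq (b := fun l => logCoeff α g k l z) (fun x => ?_) l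
    (Nat.lt_succ_of_le hl)
  have h := hc (Real.exp x) (Real.exp_pos x)
  simp only [ofReal_exp_cpow, Real.log_exp] at h
  rw [iteratedDeriv_cexp_mul_eqOn hW hα hg x k hz] at h
  refine mul_left_cancel₀ (Complex.exp_ne_zero (x * α z)) ?_
  calc _ = ∑ l ∈ range (k + 1), c l * Complex.exp (x * α z) * (x : ℂ) ^ l := by
        rw [mul_sum]; exact sum_congr rfl fun l _ => by ring
    _ = _ := h.symm
    _ = _ := by dsimp only; rw [mul_sum, mul_sum]; exact sum_congr rfl fun l _ => by ring

end logCoeff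

/-- Transition lemma (scalar form): if the coefficients `c k l` satisfy
`∂_z^k (t^{α(z)} g(z)) = Σ_{l=0}^k c_{k,l}(z) t^{α(z)} (log t)^l` for all `t > 0`,
and `α(z) + c ≠ 0` on `W`, then
`d^k/dz^k (−g(z)/(α(z)+c)) = Σ_{l=0}^k ((−1)^{l+1} l!/(α(z)+c)^{l+1}) c_{k,l}(z)`. -/
theorem stmt12 (W : Set ℂ) (hW : IsOpen W) (α g : ℂ → ℂ)
    (hα : DifferentiableOn ℂ α W) (hg : DifferentiableOn ℂ g W)
    (cconst : ℂ) (hne : ∀ z ∈ W, α z + cconst ≠ 0)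
    (c : ℕ → ℕ → ℂ → ℂ)
    (hc : ∀ k, ∀ t : ℝ, 0 < t → ∀ z ∈ W,
      iteratedDeriv k (fun w => (t : ℂ) ^ (α w) * g w) z
        = ∑ l ∈ Finset.range (k + 1), c k l z * (t : ℂ) ^ (α z) * (Real.log t : ℂ) ^ l) :
    ∀ k, ∀ z ∈ W,
      iteratedDeriv k (fun w => -(g w) / (α w + cconst)) z
        = ∑ l ∈ Finset.range (k + 1),
            ((-1 : ℂ) ^ (l + 1) * (Nat.factorial l : ℂ) / (α z + cconst) ^ (l + 1))
              * c k l z := by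
  intro k z hz
  have hcoeff := eq_logCoeff_of_iteratedDeriv_cpow_mul hW hα hg hz fun t ht => hc k t ht z hz
  rw [iteratedDeriv_neg_div_add_const_eqOn hW hα hg hne k hz]
  exact sum_congr rfl fun l hl => by
    rw [hcoeff l (Nat.le_of_lt_succ (mem_range.mp hl))]; rfl
end

section
/- Let n ≥ 1, let σ : ℝⁿ → ℂ be given for |ξ| ≥ 1 by σ(ξ) = |ξ|^{s−n} (log|ξ|)^l where s ∈ ℂ, s ≠ 0, and l is a non-negative integer, and let σ be bounded measurable on |ξ| ≤ 1. Then as R → ∞, ∫_{B(0,R)} σ(ξ) dξ = P(log R) · R^s + C + o(1), where P is a polynomial of degree l (depending on s, l, n) and the constant term is C = ∫_{B(0,1)} σ(ξ) dξ + vol(S^{n−1}) · (−1)^{l+1} l! / s^{l+1}. -/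
/-!
For `R ≥ 1` the asymptotic formula is an exact identity. Split `B(0,R)` into `B(0,1)` and the
annulus `1 < |ξ| ≤ R`; in polar coordinates the annulus contributes
`vol(S^{n-1}) ∫_1^R y^(s-1) (log y)^l dy`. Since `s ≠ 0`, the equation `Q' + s Q = X^l` has a
polynomial solution `Q` of degree `l`, and `Q(log y) y^s` is a primitive of the integrand, so the
annulus contributes `vol(S^{n-1}) (Q(log R) R^s - Q(0))` with `Q(0) = (-1)^l l! / s^(l+1)`.
-/

open MeasureTheory Metric Filter Polynomial Set

/-- The polynomial `Q` with `Q' + s Q = X ^ l`, so that `Q (log y) * y ^ s` is a primitive of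
`y ^ (s - 1) * (log y) ^ l`. -/
noncomputable def logPowAntideriv (s : ℂ) : ℕ → ℂ[X]
  | 0 => C s⁻¹
  | l + 1 => C s⁻¹ * (X ^ (l + 1) - C ((l : ℂ) + 1) * logPowAntideriv s l)

namespace logPowAntideriv

variable {s : ℂ}

theorem derivative_add_C_mul (hs : s ≠ 0) (l : ℕ) :
    derivative (logPowAntideriv s l) + C s * logPowAntideriv s l = X ^ l := by
  have hss : C s * C s⁻¹ = (1 : ℂ[X]) := by rw [← C_mul, mul_inv_cancel₀ hs, C_1]
  induction l with
  | zero => simp [logPowAntideriv, ← C_mul, mul_inv_cancel₀ hs]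
  | succ l ih =>
    simp only [logPowAntideriv, derivative_mul, derivative_C, derivative_sub,
      derivative_X_pow, zero_mul, zero_add]
    push_cast
    linear_combination X ^ (l + 1) * hss - C s⁻¹ * C ((l : ℂ) + 1) * ih

theorem natDegree_le (s : ℂ) (l : ℕ) : (logPowAntideriv s l).natDegree ≤ l := by
  induction l with
  | zero => simp [logPowAntideriv]
  | succ l ih =>
    refine natDegree_C_mul_le _ _ |>.trans <| natDegree_sub_le _ _ |>.trans <| max_le ?_ ?_
    · exact (natDegree_X_pow_le _)
    · exact natDegree_C_mul_le _ _ |>.trans (ih.trans l.le_succ)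

theorem coeff_self (s : ℂ) (l : ℕ) : (logPowAntideriv s l).coeff l = s⁻¹ := by
  induction l with
  | zero => simp [logPowAntideriv]
  | succ l ih =>
    have hvanish : (logPowAntideriv s l).coeff (l + 1) = 0 :=
      coeff_eq_zero_of_natDegree_lt ((natDegree_le s l).trans_lt l.lt_succ_self)
    rw [logPowAntideriv, coeff_C_mul, coeff_sub, coeff_X_pow_self, coeff_C_mul, hvanish,
      mul_zero, sub_zero, mul_one]

theorem degree_eq (hs : s ≠ 0) (l : ℕ) : (logPowAntideriv s l).degree = l :=
  degree_eq_of_le_of_coeff_ne_zero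
    (degree_le_natDegree.trans (by exact_mod_cast natDegree_le s l))
    (by rw [coeff_self]; exact inv_ne_zero hs)

theorem eval_zero (s : ℂ) (l : ℕ) :
    (logPowAntideriv s l).eval 0 = (-1) ^ l * l.factorial / s ^ (l + 1) := by
  induction l with
  | zero => simp [logPowAntideriv]
  | succ l ih =>
    simp only [logPowAntideriv, eval_mul, eval_C, eval_sub, eval_pow, eval_X, ih,
      Nat.factorial_succ]
    push_cast
    rw [zero_pow l.succ_ne_zero, div_eq_mul_inv, div_eq_mul_inv, pow_succ _ (l + 1), mul_inv]
    ring

end logPowAntideriv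

theorem continuousOn_ofReal_cpow_mul_log_pow (c : ℂ) (l : ℕ) :
    ContinuousOn (fun y : ℝ => (y : ℂ) ^ c * (Real.log y : ℂ) ^ l) (Ioi 0) :=
  fun y hy => ContinuousAt.continuousWithinAt <|
    (Complex.continuousAt_ofReal_cpow_const y c (Or.inr (ne_of_gt hy))).mul
      ((Complex.continuous_ofReal.continuousAt.comp (Real.continuousAt_log (ne_of_gt hy))).pow l)

theorem hasDerivAt_eval_log_mul_cpow (P : ℂ[X]) (s : ℂ) {y : ℝ} (hy : 0 < y) :
    HasDerivAt (fun t : ℝ => P.eval (Real.log t : ℂ) * (t : ℂ) ^ s)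
      ((y : ℂ) ^ (s - 1) * ((derivative P).eval (Real.log y : ℂ) + s * P.eval (Real.log y : ℂ)))
      y := by
  have hlog : HasDerivAt (fun t : ℝ => P.eval (Real.log t : ℂ))
      (y⁻¹ • (derivative P).eval (Real.log y : ℂ)) y :=
    (P.hasDerivAt _).comp_ofReal.scomp y (Real.hasDerivAt_log hy.ne')
  have hcpow : HasDerivAt (fun t : ℝ => (t : ℂ) ^ s) (s * (y : ℂ) ^ (s - 1)) y := by
    simpa using
      ((hasDerivAt_id (y : ℂ)).cpow_const (Complex.ofReal_mem_slitPlane.2 hy)).comp_ofReal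
  have hy' : (y : ℂ) ≠ 0 := by exact_mod_cast hy.ne'
  have hsplit : (y : ℂ) ^ s = (y : ℂ) ^ (s - 1) * y := by
    conv_lhs => rw [← sub_add_cancel s 1, Complex.cpow_add _ _ hy', Complex.cpow_one]
  refine (hlog.mul hcpow).congr_deriv ?_
  rw [hsplit, Complex.real_smul, Complex.ofReal_inv]
  field_simp

theorem integral_cpow_sub_one_mul_log_pow {s : ℂ} (hs : s ≠ 0) (l : ℕ) {a b : ℝ}
    (ha : 0 < a) (hb : 0 < b) :
    ∫ y in a..b, (y : ℂ) ^ (s - 1) * (Real.log y : ℂ) ^ l =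
      (logPowAntideriv s l).eval (Real.log b : ℂ) * (b : ℂ) ^ s
        - (logPowAntideriv s l).eval (Real.log a : ℂ) * (a : ℂ) ^ s := by
  have hpos : ∀ y ∈ uIcc a b, 0 < y := fun y hy => (lt_min ha hb).trans_le hy.1
  refine intervalIntegral.integral_eq_sub_of_hasDerivAt
    (f := fun t : ℝ => (logPowAntideriv s l).eval (Real.log t : ℂ) * (t : ℂ) ^ s)
    (fun y hy => ?_) ?_
  · have hode := congrArg (eval (Real.log y : ℂ)) (logPowAntideriv.derivative_add_C_mul hs l)
    simp only [eval_add, eval_mul, eval_C, eval_pow, eval_X] at hode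
    simpa only [hode] using hasDerivAt_eval_log_mul_cpow (logPowAntideriv s l) s (hpos y hy)
  · exact ((continuousOn_ofReal_cpow_mul_log_pow _ l).mono hpos).intervalIntegrable

section Radial

variable {E F : Type*} [NormedAddCommGroup E] [NormedAddCommGroup F]

theorem closedBall_zero_eq_union_norm_preimage_Ioc {a b : ℝ} (hab : a ≤ b) :
    closedBall (0 : E) b = closedBall 0 a ∪ norm ⁻¹' Ioc a b := by
  ext x
  simp only [mem_closedBall_zero_iff, mem_union, mem_preimage, mem_Ioc]
  constructor
  · intro h
    exact (le_or_gt ‖x‖ a).imp id fun ha => ⟨ha, h⟩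
  · rintro (h | h)
    exacts [h.trans hab, h.2]

variable [MeasurableSpace E] [BorelSpace E]

theorem integrableOn_closedBall_zero_of_eq_radial (μ : Measure E) [IsFiniteMeasureOnCompacts μ]
    [ProperSpace E] {f : E → F} (hfm : AEStronglyMeasurable f μ) {r R : ℝ}
    (hbdd : ∃ C, ∀ x, ‖x‖ ≤ r → ‖f x‖ ≤ C) {g : ℝ → F} (hg : ContinuousOn g (Icc r R))
    (hfg : ∀ x, r ≤ ‖x‖ → f x = g ‖x‖) :
    IntegrableOn f (closedBall 0 R) μ := by
  obtain ⟨C, hC⟩ := hbdd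
  obtain ⟨D, hD⟩ := isCompact_Icc.exists_bound_of_continuousOn hg
  refine Measure.integrableOn_of_bounded (M := max C D) measure_closedBall_lt_top.ne hfm ?_
  filter_upwards [ae_restrict_mem measurableSet_closedBall] with x hx
  rcases le_total ‖x‖ r with h | h
  · exact (hC x h).trans (le_max_left _ _)
  · rw [hfg x h]
    exact (hD _ ⟨h, mem_closedBall_zero_iff.1 hx⟩).trans (le_max_right _ _)

variable [NormedSpace ℝ F]

theorem setIntegral_closedBall_zero_eq_add (μ : Measure E) {f : E → F} {a b : ℝ} (hab : a ≤ b)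
    (hf : IntegrableOn f (closedBall 0 b) μ) :
    ∫ x in closedBall 0 b, f x ∂μ =
      ∫ x in closedBall 0 a, f x ∂μ + ∫ x in norm ⁻¹' Ioc a b, f x ∂μ := by
  rw [closedBall_zero_eq_union_norm_preimage_Ioc hab] at hf ⊢
  refine setIntegral_union ?_ (measurableSet_Ioc.preimage measurable_norm) hf.left_of_union
    hf.right_of_union
  exact disjoint_left.2 fun x hx hx' => (mem_closedBall_zero_iff.1 hx).not_gt hx'.1

variable [NormedSpace ℝ E] [FiniteDimensional ℝ E] (μ : Measure E) [μ.IsAddHaarMeasure]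

theorem MeasureTheory.Measure.toSphere_real_univ_pos [Nontrivial E] : 0 < μ.toSphere.real univ := by
  rw [μ.toSphere_real_apply_univ]
  exact mul_pos (by exact_mod_cast Module.finrank_pos)
    (ENNReal.toReal_pos (measure_ball_pos μ 0 one_pos).ne' measure_ball_lt_top.ne)

theorem setIntegral_norm_preimage_Ioc [Nontrivial E] (f : ℝ → F) {a b : ℝ} (ha : 0 ≤ a)
    (hab : a ≤ b) :
    ∫ x in norm ⁻¹' Ioc a b, f ‖x‖ ∂μ =
      μ.toSphere.real univ • ∫ y in a..b, y ^ (Module.finrank ℝ E - 1) • f y := by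
  rw [← integral_indicator (measurableSet_Ioc.preimage measurable_norm)]
  have hcomp : (norm ⁻¹' Ioc a b).indicator (fun x : E => f ‖x‖) =
      fun x => (Ioc a b).indicator f ‖x‖ := funext fun x => indicator_comp_right (g := f) norm
  rw [hcomp, integral_fun_norm_addHaar μ]
  have hind : (fun y : ℝ => y ^ (Module.finrank ℝ E - 1) • (Ioc a b).indicator f y) =
      (Ioc a b).indicator fun y => y ^ (Module.finrank ℝ E - 1) • f y :=
    funext fun y => (indicator_smul_apply _ _ _ y).symm
  rw [hind, setIntegral_indicator measurableSet_Ioc,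
    inter_eq_right.2 (Ioc_subset_Ioi_self.trans (Ioi_subset_Ioi ha)),
    ← intervalIntegral.integral_of_le hab, μ.toSphere_real_apply_univ, mul_smul,
    Nat.cast_smul_eq_nsmul]

end Radial

theorem setIntegral_closedBall_zero_of_eq_cpow_mul_log_pow {E : Type*} [NormedAddCommGroup E]
    [NormedSpace ℝ E] [MeasurableSpace E] [BorelSpace E] [FiniteDimensional ℝ E] [Nontrivial E]
    (μ : Measure E) [μ.IsAddHaarMeasure] {s : ℂ} (hs : s ≠ 0) (l : ℕ) {σ : E → ℂ}
    (hσm : AEStronglyMeasurable σ μ) (hσb : ∃ C, ∀ ξ : E, ‖ξ‖ ≤ 1 → ‖σ ξ‖ ≤ C)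
    (hσ : ∀ ξ : E, 1 ≤ ‖ξ‖ →
      σ ξ = (‖ξ‖ : ℂ) ^ (s - Module.finrank ℝ E) * (Real.log ‖ξ‖ : ℂ) ^ l)
    {R : ℝ} (hR : 1 ≤ R) :
    ∫ ξ in closedBall 0 R, σ ξ ∂μ = ∫ ξ in closedBall 0 1, σ ξ ∂μ +
      μ.toSphere.real univ * ((logPowAntideriv s l).eval (Real.log R : ℂ) * (R : ℂ) ^ s
        - (-1) ^ l * l.factorial / s ^ (l + 1)) := by
  have hg : ContinuousOn
      (fun y : ℝ => (y : ℂ) ^ (s - Module.finrank ℝ E) * (Real.log y : ℂ) ^ l) (Icc 1 R) :=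
    (continuousOn_ofReal_cpow_mul_log_pow _ l).mono fun y hy => zero_lt_one.trans_le hy.1
  have hradial : ∀ y ∈ uIcc 1 R,
      y ^ (Module.finrank ℝ E - 1) • ((y : ℂ) ^ (s - Module.finrank ℝ E) * (Real.log y : ℂ) ^ l) =
        (y : ℂ) ^ (s - 1) * (Real.log y : ℂ) ^ l := by
    intro y hy
    have hy' : (y : ℂ) ≠ 0 := by
      have : 0 < y := zero_lt_one.trans_le (uIcc_of_le hR ▸ hy).1
      exact_mod_cast this.ne'
    rw [Complex.real_smul, Complex.ofReal_pow, ← Complex.cpow_natCast, ← mul_assoc,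
      ← Complex.cpow_add _ _ hy', Nat.cast_sub Module.finrank_pos]
    congr 2
    push_cast
    ring
  have hpolar := setIntegral_norm_preimage_Ioc μ
    (fun y : ℝ => (y : ℂ) ^ (s - Module.finrank ℝ E) * (Real.log y : ℂ) ^ l) zero_le_one hR
  beta_reduce at hpolar
  rw [setIntegral_closedBall_zero_eq_add μ hR
      (integrableOn_closedBall_zero_of_eq_radial μ hσm hσb hg hσ),
    setIntegral_congr_fun (measurableSet_Ioc.preimage measurable_norm) fun ξ hξ => hσ ξ hξ.1.le,
    hpolar, intervalIntegral.integral_congr hradial,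
    integral_cpow_sub_one_mul_log_pow hs l one_pos (zero_lt_one.trans_le hR),
    Real.log_one, Complex.ofReal_zero, Complex.ofReal_one, Complex.one_cpow, mul_one,
    logPowAntideriv.eval_zero, Complex.real_smul]

/-- Cut-off integral asymptotics for a rotationally invariant log-homogeneous
symbol of degree `s − n` with `s ≠ 0`: as `R → ∞`,
`∫_{B(0,R)} σ = P(log R) R^s + C + o(1)` with `P` a polynomial of degree `l` and
constant term `C = ∫_{B(0,1)} σ + vol(S^{n−1}) (−1)^{l+1} l!/s^{l+1}`. -/
theorem stmt16 (n : ℕ) (hn : 1 ≤ n) (s : ℂ) (hs : s ≠ 0) (l : ℕ)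
    (σ : EuclideanSpace ℝ (Fin n) → ℂ) (hσm : Measurable σ)
    (hσb : ∃ C : ℝ, ∀ ξ : EuclideanSpace ℝ (Fin n), ‖ξ‖ ≤ 1 → ‖σ ξ‖ ≤ C)
    (hσ : ∀ ξ : EuclideanSpace ℝ (Fin n), 1 ≤ ‖ξ‖ →
      σ ξ = (‖ξ‖ : ℂ) ^ (s - n) * (Real.log ‖ξ‖ : ℂ) ^ l) :
    ∃ P : Polynomial ℂ, P.degree = l ∧
      Tendsto
        (fun R : ℝ =>
          (∫ ξ in Metric.closedBall (0 : EuclideanSpace ℝ (Fin n)) R, σ ξ)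
            - P.eval ((Real.log R : ℝ) : ℂ) * (R : ℂ) ^ s
            - ((∫ ξ in Metric.closedBall (0 : EuclideanSpace ℝ (Fin n)) 1, σ ξ)
                + (((volume : Measure (EuclideanSpace ℝ (Fin n))).toSphere
                      Set.univ).toReal : ℂ) *
                    (-1 : ℂ) ^ (l + 1) * (Nat.factorial l : ℂ) / s ^ (l + 1)))
        atTop (nhds 0) := by
  have : Nonempty (Fin n) := ⟨⟨0, hn⟩⟩
  set A := (volume : Measure (EuclideanSpace ℝ (Fin n))).toSphere.real univ
  have hA : (A : ℂ) ≠ 0 := by exact_mod_cast (Measure.toSphere_real_univ_pos volume).ne'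
  refine ⟨C (A : ℂ) * logPowAntideriv s l, by rw [degree_C_mul hA, logPowAntideriv.degree_eq hs],
    tendsto_const_nhds.congr' ?_⟩
  filter_upwards [eventually_ge_atTop 1] with R hR
  rw [setIntegral_closedBall_zero_of_eq_cpow_mul_log_pow volume hs l hσm.aestronglyMeasurable hσb
    (by simpa only [finrank_euclideanSpace_fin] using hσ) hR]
  simp only [eval_mul, eval_C, ← measureReal_def]
  ring
end
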